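/- For a relation R : A → A' → Prop with inverse R⁻¹ x' x := R x x', the statement ((R⁻¹ ##> impl) ##> impl) (@all A') (@all A) holds if and only if R is left-total (∀ x, ∃ x', R x x'). -/
import Mathlib


def respArrow {A B A' B' : Sort*} (R : A → A' → Prop) (R' : B → B' → Prop)
    (f : A → B) (g : A' → B') : Prop := ∀ x y, R x y → R' (f x) (g y)

def Impl (P Q : Prop) : Prop := P → Q

def all (A : Sort*) (P : A → Prop) : Prop := ∀ x, P x

theorem stmt5 {A A' : Type*} (R : A → A' → Prop) :
    respArrow (respArrow (fun x' x => R x x') Impl) Impl (all A') (all A) ↔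
      ∀ x, ∃ x', R x x' := by
  constructor
  · intro h
    exact h (fun _ => True) (fun x => ∃ x', R x x')
      (fun x' x hR _ => ⟨x', hR⟩) (fun _ => trivial)
  · intro h P Q hPQ hP x
    obtain ⟨x', hx'⟩ := h x
    exact hPQ x' x hx' (hP x')
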